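/- arXiv:1704.03112 — 4 statements merged into one kernel-verified Lean document; each statement's English description precedes it below -/
import Mathlib

section
/- For every orientation-preserving homeomorphism f of the closed interval [0,1] and every positive integer n, there exists an orientation-preserving homeomorphism g of [0,1] such that g^n = f. -/
/-!
The fixed points of an increasing permutation `F` of `ℝ` cut the line into open gaps, each
preserved by `F`, on which `F` moves all points up or all points down. If `c` lies in a gap and
`c < F c`, spreading the affine parametrisation of `[c, F c)` along the orbit of `c` gives an
increasing bijection from `ℝ` onto the gap that conjugates translation by `1` to `F` (when
`F c < c`, build it from `F⁻¹` instead, and `F` becomes translation by `-1`). Conjugating the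
translations by `s` on all gaps at once gives a flow `φ s` of increasing permutations with
`φ 1 = F`, so `φ (1 / n)` is an `n`-th root of `F`. A homeomorphism of `[0, 1]` is first extended
by the identity to `ℝ`.
-/

open Function Set

lemma add_mul_sub_mem_Ico {𝕜 : Type*} [Field 𝕜] [LinearOrder 𝕜] [IsStrictOrderedRing 𝕜]
    {a b t : 𝕜} (hab : a < b) (ht : t ∈ Ico 0 1) : a + t * (b - a) ∈ Ico a b :=
  ⟨by nlinarith [ht.1], by nlinarith [ht.2]⟩

namespace Equiv.Perm

lemma zpow_add_one_apply {α : Type*} (F : Perm α) (k : ℤ) (x : α) :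
    (F ^ (k + 1)) x = F ((F ^ k) x) := by
  rw [add_comm, zpow_one_add, mul_apply]

lemma image_fixedPoints_inter {α : Type*} (F : Perm α) (t : Set α) :
    F '' (fixedPoints F ∩ t) = fixedPoints F ∩ t := by
  ext z
  constructor
  · rintro ⟨y, hy, rfl⟩
    rwa [hy.1.eq]
  · exact fun hz => ⟨z, hz, hz.1⟩

lemma fixedPoints_inv {α : Type*} (F : Perm α) : fixedPoints ⇑F⁻¹ = fixedPoints F :=
  Set.ext fun _ => ⟨fun h => by simpa using h.perm_inv, IsFixedPt.perm_inv⟩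

section LinearOrder

variable {α : Type*} [LinearOrder α]

def strictMonoSubgroup (α : Type*) [LinearOrder α] : Subgroup (Perm α) where
  carrier := {F | StrictMono F}
  mul_mem' hF hG := hF.comp hG
  one_mem' := strictMono_id
  inv_mem' {F} hF _ _ h := hF.lt_iff_lt.1 (by simpa using h)

lemma strictMono_zpow {F : Perm α} (hF : StrictMono F) (k : ℤ) : StrictMono ⇑(F ^ k) :=
  zpow_mem (show F ∈ strictMonoSubgroup α from hF) k

lemma strictMono_inv {F : Perm α} (hF : StrictMono F) : StrictMono ⇑F⁻¹ :=
  inv_mem (show F ∈ strictMonoSubgroup α from hF)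

lemma strictMono_ofSubtype_Icc {a b : α} {f : Perm (Icc a b)} (hf : StrictMono f) :
    StrictMono (ofSubtype f) := by
  intro x y hxy
  by_cases hx : x ∈ Icc a b <;> by_cases hy : y ∈ Icc a b
  · rw [ofSubtype_apply_of_mem f hx, ofSubtype_apply_of_mem f hy]
    exact hf (Subtype.mk_lt_mk.2 hxy)
  · rw [ofSubtype_apply_of_mem f hx, ofSubtype_apply_of_not_mem f hy]
    exact (f ⟨x, hx⟩).2.2.trans_lt (lt_of_not_ge fun h => hy ⟨hx.1.trans hxy.le, h⟩)
  · rw [ofSubtype_apply_of_not_mem f hx, ofSubtype_apply_of_mem f hy]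
    exact (lt_of_not_ge fun h => hx ⟨h, hxy.le.trans hy.2⟩).trans_le (f ⟨y, hy⟩).2.1
  · rwa [ofSubtype_apply_of_not_mem f hx, ofSubtype_apply_of_not_mem f hy]

lemma strictMono_zpow_apply {F : Perm α} (hF : StrictMono F) {c : α} (hc : c < F c) :
    StrictMono fun k : ℤ => (F ^ k) c :=
  strictMono_int_of_lt_succ fun k => by
    simpa only [zpow_add_one, mul_apply] using strictMono_zpow hF k hc

lemma _root_.Monotone.exists_int_le_lt_add_one {o : ℤ → α} (ho : Monotone o) {y : α}
    (hlo : ∃ k, o k ≤ y) (hhi : ∃ k, y < o k) : ∃ k, o k ≤ y ∧ y < o (k + 1) := by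
  obtain ⟨k₀, hk₀⟩ := hhi
  obtain ⟨k, hk, hmax⟩ :=
    Int.exists_greatest_of_bdd ⟨k₀, fun z hz => (ho.reflect_lt (hz.trans_lt hk₀)).le⟩ hlo
  exact ⟨k, hk, lt_of_not_ge fun h => (hmax _ h).not_gt (lt_add_one k)⟩

end LinearOrder

section Gap

variable {α : Type*} [ConditionallyCompleteLinearOrder α] {F : Perm α} {x y : α}

lemma isFixedPt_csSup_of_image_eq (hF : StrictMono F) {s : Set α} (hne : s.Nonempty)
    (hbdd : BddAbove s) (hs : F '' s = s) : IsFixedPt F (sSup s) := by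
  show F (sSup s) = sSup s
  simpa [hs] using (hF.orderIsoOfSurjective F F.surjective).map_csSup' hne hbdd

lemma isFixedPt_csInf_of_image_eq (hF : StrictMono F) {s : Set α} (hne : s.Nonempty)
    (hbdd : BddBelow s) (hs : F '' s = s) : IsFixedPt F (sInf s) := by
  show F (sInf s) = sInf s
  simpa [hs] using (hF.orderIsoOfSurjective F F.surjective).map_csInf' hne hbdd

def lowerFixedPt (F : Perm α) (x : α) : α := sSup (fixedPoints F ∩ Iic x)

def upperFixedPt (F : Perm α) (x : α) : α := sInf (fixedPoints F ∩ Ici x)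

def gap (F : Perm α) (x : α) : Set α := Ioo (lowerFixedPt F x) (upperFixedPt F x)

lemma le_lowerFixedPt (hy : IsFixedPt F y) (hyx : y ≤ x) : y ≤ lowerFixedPt F x :=
  le_csSup ⟨x, fun _ h => h.2⟩ ⟨hy, hyx⟩

lemma upperFixedPt_le (hy : IsFixedPt F y) (hxy : x ≤ y) : upperFixedPt F x ≤ y :=
  csInf_le ⟨x, fun _ h => h.2⟩ ⟨hy, hxy⟩

lemma not_isFixedPt_of_mem_gap (hy : y ∈ gap F x) : ¬IsFixedPt F y := fun hfix =>
  (le_total y x).elim (fun h => (le_lowerFixedPt hfix h).not_gt hy.1)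
    fun h => (upperFixedPt_le hfix h).not_gt hy.2

lemma fixedPoints_inter_Iic_nonempty (hlow : ¬BddBelow (fixedPoints F)) (x : α) :
    (fixedPoints F ∩ Iic x).Nonempty :=
  (not_bddBelow_iff.1 hlow x).imp fun _ hy => ⟨hy.1, hy.2.le⟩

lemma fixedPoints_inter_Ici_nonempty (hhigh : ¬BddAbove (fixedPoints F)) (x : α) :
    (fixedPoints F ∩ Ici x).Nonempty :=
  (not_bddAbove_iff.1 hhigh x).imp fun _ hy => ⟨hy.1, hy.2.le⟩

lemma lowerFixedPt_le (hlow : ¬BddBelow (fixedPoints F)) (x : α) : lowerFixedPt F x ≤ x :=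
  csSup_le (fixedPoints_inter_Iic_nonempty hlow x) fun _ h => h.2

lemma le_upperFixedPt (hhigh : ¬BddAbove (fixedPoints F)) (x : α) : x ≤ upperFixedPt F x :=
  le_csInf (fixedPoints_inter_Ici_nonempty hhigh x) fun _ h => h.2

lemma isFixedPt_lowerFixedPt (hF : StrictMono F) (hlow : ¬BddBelow (fixedPoints F)) (x : α) :
    IsFixedPt F (lowerFixedPt F x) :=
  isFixedPt_csSup_of_image_eq hF (fixedPoints_inter_Iic_nonempty hlow x) ⟨x, fun _ h => h.2⟩
    (image_fixedPoints_inter F _)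

lemma isFixedPt_upperFixedPt (hF : StrictMono F) (hhigh : ¬BddAbove (fixedPoints F)) (x : α) :
    IsFixedPt F (upperFixedPt F x) :=
  isFixedPt_csInf_of_image_eq hF (fixedPoints_inter_Ici_nonempty hhigh x) ⟨x, fun _ h => h.2⟩
    (image_fixedPoints_inter F _)

lemma mem_gap_self (hF : StrictMono F) (hlow : ¬BddBelow (fixedPoints F))
    (hhigh : ¬BddAbove (fixedPoints F)) (hx : ¬IsFixedPt F x) : x ∈ gap F x :=
  ⟨(lowerFixedPt_le hlow x).lt_of_ne fun h => hx (h ▸ isFixedPt_lowerFixedPt hF hlow x),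
    (le_upperFixedPt hhigh x).lt_of_ne fun h => hx (h ▸ isFixedPt_upperFixedPt hF hhigh x)⟩

lemma lowerFixedPt_eq_of_mem_gap (hF : StrictMono F) (hlow : ¬BddBelow (fixedPoints F))
    (hy : y ∈ gap F x) : lowerFixedPt F y = lowerFixedPt F x := by
  refine le_antisymm ?_ (le_lowerFixedPt (isFixedPt_lowerFixedPt hF hlow x) hy.1.le)
  by_contra! h
  exact not_isFixedPt_of_mem_gap (x := x) ⟨h, (lowerFixedPt_le hlow y).trans_lt hy.2⟩
    (isFixedPt_lowerFixedPt hF hlow y)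

lemma upperFixedPt_eq_of_mem_gap (hF : StrictMono F) (hhigh : ¬BddAbove (fixedPoints F))
    (hy : y ∈ gap F x) : upperFixedPt F y = upperFixedPt F x := by
  refine le_antisymm (upperFixedPt_le (isFixedPt_upperFixedPt hF hhigh x) hy.2.le) ?_
  by_contra! h
  exact not_isFixedPt_of_mem_gap (x := x) ⟨hy.1.trans_le (le_upperFixedPt hhigh y), h⟩
    (isFixedPt_upperFixedPt hF hhigh y)

lemma zpow_mem_gap (hF : StrictMono F) (hlow : ¬BddBelow (fixedPoints F))
    (hhigh : ¬BddAbove (fixedPoints F)) (hy : y ∈ gap F x) (k : ℤ) : (F ^ k) y ∈ gap F x := by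
  have hk := strictMono_zpow hF k
  have h₁ := hk hy.1
  have h₂ := hk hy.2
  rw [((isFixedPt_lowerFixedPt hF hlow x).perm_zpow k).eq] at h₁
  rw [((isFixedPt_upperFixedPt hF hhigh x).perm_zpow k).eq] at h₂
  exact ⟨h₁, h₂⟩

lemma exists_zpow_le_lt (hF : StrictMono F) {c : α} (hc : c ∈ gap F x) (hcF : c < F c)
    (hy : y ∈ gap F x) : ∃ k : ℤ, (F ^ k) c ≤ y ∧ y < (F ^ (k + 1)) c := by
  set o : ℤ → α := fun k => (F ^ k) c
  have himg : F '' range o = range o := by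
    have hshift : ⇑F ∘ o = o ∘ (· + 1) := funext fun k => (zpow_add_one_apply F k c).symm
    rw [← range_comp, hshift, (add_right_surjective (1 : ℤ)).range_comp]
  -- an orbit bounded on one side would accumulate at a fixed point inside the gap
  have hlo : ∃ k, o k ≤ y := by
    by_contra! h
    have hbdd : BddBelow (range o) := ⟨y, forall_mem_range.2 fun k => (h k).le⟩
    exact not_isFixedPt_of_mem_gap
      ⟨hy.1.trans_le (le_csInf (range_nonempty o) (forall_mem_range.2 fun k => (h k).le)),
        (csInf_le hbdd ⟨0, rfl⟩).trans_lt (by simpa [o] using hc.2)⟩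
      (isFixedPt_csInf_of_image_eq hF (range_nonempty o) hbdd himg)
  have hhi : ∃ k, y < o k := by
    by_contra! h
    have hbdd : BddAbove (range o) := ⟨y, forall_mem_range.2 h⟩
    exact not_isFixedPt_of_mem_gap
      ⟨(by simpa [o] using hc.1 : lowerFixedPt F x < o 0).trans_le (le_csSup hbdd ⟨0, rfl⟩),
        (csSup_le (range_nonempty o) (forall_mem_range.2 h)).trans_lt hy.2⟩
      (isFixedPt_csSup_of_image_eq hF (range_nonempty o) hbdd himg)
  exact (strictMono_zpow_apply hF hcF).monotone.exists_int_le_lt_add_one hlo hhi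

end Gap

section Real

variable {F : Perm ℝ} {c x y : ℝ}

-- `[c, F c)` is a fundamental domain of `F`: parametrise it affinely and extend equivariantly.
noncomputable def orbitCoord (F : Perm ℝ) (c r : ℝ) : ℝ := (F ^ ⌊r⌋) (c + Int.fract r * (F c - c))

lemma orbitCoord_add_one (F : Perm ℝ) (c r : ℝ) :
    orbitCoord F c (r + 1) = F (orbitCoord F c r) := by
  rw [orbitCoord, orbitCoord, Int.floor_add_one, Int.fract_add_one, zpow_add_one_apply]

lemma orbitCoord_intCast_add {t : ℝ} (ht : t ∈ Ico 0 1) (k : ℤ) :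
    orbitCoord F c (k + t) = (F ^ k) (c + t * (F c - c)) := by
  rw [orbitCoord, Int.floor_intCast_add, Int.floor_eq_zero_iff.2 ht, add_zero,
    Int.fract_intCast_add, Int.fract_eq_self.2 ht]

lemma orbitCoord_mem_Ico (hF : StrictMono F) (hcF : c < F c) (r : ℝ) :
    orbitCoord F c r ∈ Ico ((F ^ ⌊r⌋) c) ((F ^ (⌊r⌋ + 1)) c) := by
  have h := add_mul_sub_mem_Ico hcF ⟨Int.fract_nonneg r, Int.fract_lt_one r⟩
  rw [zpow_add_one, mul_apply]
  exact ⟨(strictMono_zpow hF _).monotone h.1, strictMono_zpow hF _ h.2⟩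

lemma strictMono_orbitCoord (hF : StrictMono F) (hcF : c < F c) : StrictMono (orbitCoord F c) := by
  intro r r' hr
  rcases (Int.floor_mono hr.le).eq_or_lt with hfl | hfl
  · have hfract : Int.fract r < Int.fract r' := by
      rw [Int.fract, Int.fract, hfl]
      linarith
    rw [orbitCoord, orbitCoord, hfl]
    exact strictMono_zpow hF _ (by nlinarith)
  · calc orbitCoord F c r < (F ^ (⌊r⌋ + 1)) c := (orbitCoord_mem_Ico hF hcF r).2
      _ ≤ (F ^ ⌊r'⌋) c := (strictMono_zpow_apply hF hcF).monotone (Int.add_one_le_iff.2 hfl)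
      _ ≤ orbitCoord F c r' := (orbitCoord_mem_Ico hF hcF r').1

lemma orbitCoord_mem_gap (hF : StrictMono F) (hlow : ¬BddBelow (fixedPoints F))
    (hhigh : ¬BddAbove (fixedPoints F)) (hc : c ∈ gap F x) (hcF : c < F c) (r : ℝ) :
    orbitCoord F c r ∈ gap F x := by
  have hp := add_mul_sub_mem_Ico hcF ⟨Int.fract_nonneg r, Int.fract_lt_one r⟩
  have hFc : F c ∈ gap F x := by simpa using zpow_mem_gap hF hlow hhigh hc 1
  exact zpow_mem_gap hF hlow hhigh ⟨hc.1.trans_le hp.1, hp.2.trans hFc.2⟩ _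

lemma exists_orbitCoord_eq (hF : StrictMono F) (hc : c ∈ gap F x) (hcF : c < F c)
    (hy : y ∈ gap F x) : ∃ r, orbitCoord F c r = y := by
  obtain ⟨k, hk₁, hk₂⟩ := exists_zpow_le_lt hF hc hcF hy
  have hinv := strictMono_inv (strictMono_zpow hF k)
  have hz : (F ^ k)⁻¹ y ∈ Ico c (F c) := by
    have h₁ := hinv.monotone hk₁
    have h₂ := hinv hk₂
    rw [Perm.coe_inv, symm_apply_apply] at h₁
    rw [zpow_add_one, mul_apply, Perm.coe_inv, symm_apply_apply] at h₂
    exact ⟨h₁, h₂⟩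
  have hd : 0 < F c - c := sub_pos.2 hcF
  have ht : ((F ^ k)⁻¹ y - c) / (F c - c) ∈ Ico 0 1 :=
    ⟨div_nonneg (sub_nonneg.2 hz.1) hd.le, (div_lt_one hd).2 (by linarith [hz.2])⟩
  refine ⟨k + ((F ^ k)⁻¹ y - c) / (F c - c), ?_⟩
  rw [orbitCoord_intCast_add ht, div_mul_cancel₀ _ hd.ne', add_sub_cancel, Perm.coe_inv,
    apply_symm_apply]

lemma gap_congr {G : Perm ℝ} (h : fixedPoints G = fixedPoints F) : gap G = gap F := by
  unfold gap lowerFixedPt upperFixedPt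
  rw [h]

noncomputable def gapMid (F : Perm ℝ) (x : ℝ) : ℝ := (lowerFixedPt F x + upperFixedPt F x) / 2

lemma gapMid_mem_gap (hx : x ∈ gap F x) : gapMid F x ∈ gap F x := by
  obtain ⟨h₁, h₂⟩ := hx
  constructor <;> (rw [gapMid]; linarith)

noncomputable def gapChart (F : Perm ℝ) (x : ℝ) : ℝ → ℝ :=
  if gapMid F x < F (gapMid F x) then orbitCoord F (gapMid F x) else orbitCoord F⁻¹ (gapMid F x)

noncomputable def gapSign (F : Perm ℝ) (x : ℝ) : ℝ :=
  if gapMid F x < F (gapMid F x) then 1 else -1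

lemma gapChart_add_gapSign (F : Perm ℝ) (x r : ℝ) :
    gapChart F x (r + gapSign F x) = F (gapChart F x r) := by
  unfold gapChart gapSign
  split_ifs
  · exact orbitCoord_add_one F _ r
  · conv_rhs => rw [← sub_add_cancel r 1, orbitCoord_add_one, Perm.coe_inv, apply_symm_apply]
    rw [sub_eq_add_neg]

open Classical in
noncomputable def flow (F : Perm ℝ) (s x : ℝ) : ℝ :=
  if IsFixedPt F x then x else gapChart F x (invFun (gapChart F x) x + gapSign F x * s)

lemma flow_of_isFixedPt (hx : IsFixedPt F x) (s : ℝ) : flow F s x = x := if_pos hx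

section Unbounded

variable (hF : StrictMono F) (hlow : ¬BddBelow (fixedPoints F))
  (hhigh : ¬BddAbove (fixedPoints F))
include hF hlow hhigh

lemma gapMid_eq_of_mem_gap (hy : y ∈ gap F x) : gapMid F y = gapMid F x := by
  rw [gapMid, gapMid, lowerFixedPt_eq_of_mem_gap hF hlow hy, upperFixedPt_eq_of_mem_gap hF hhigh hy]

lemma gapChart_eq_of_mem_gap (hy : y ∈ gap F x) :
    gapChart F y = gapChart F x ∧ gapSign F y = gapSign F x := by
  simp only [gapChart, gapSign, gapMid_eq_of_mem_gap hF hlow hhigh hy, and_self]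

lemma exists_gapChart_eq_orbitCoord (hx : ¬IsFixedPt F x) :
    ∃ G : Perm ℝ, StrictMono G ∧ fixedPoints G = fixedPoints F ∧
      gapMid F x < G (gapMid F x) ∧ gapChart F x = orbitCoord G (gapMid F x) := by
  unfold gapChart
  split_ifs with h
  · exact ⟨F, hF, rfl, h, rfl⟩
  · have hmid := not_isFixedPt_of_mem_gap (gapMid_mem_gap (mem_gap_self hF hlow hhigh hx))
    have hlt : F (gapMid F x) < gapMid F x := (not_lt.1 h).lt_of_ne hmid
    refine ⟨F⁻¹, strictMono_inv hF, fixedPoints_inv F, ?_, rfl⟩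
    simpa using strictMono_inv hF hlt

lemma strictMono_gapChart (hx : ¬IsFixedPt F x) : StrictMono (gapChart F x) := by
  obtain ⟨G, hG, -, hcG, hchart⟩ := exists_gapChart_eq_orbitCoord hF hlow hhigh hx
  exact hchart ▸ strictMono_orbitCoord hG hcG

lemma gapChart_mem_gap (hx : ¬IsFixedPt F x) (r : ℝ) : gapChart F x r ∈ gap F x := by
  obtain ⟨G, hG, hfix, hcG, hchart⟩ := exists_gapChart_eq_orbitCoord hF hlow hhigh hx
  rw [hchart, ← gap_congr hfix]
  refine orbitCoord_mem_gap hG (hfix ▸ hlow) (hfix ▸ hhigh) ?_ hcG r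
  exact gap_congr hfix ▸ gapMid_mem_gap (mem_gap_self hF hlow hhigh hx)

lemma exists_gapChart_eq (hx : ¬IsFixedPt F x) (hy : y ∈ gap F x) : ∃ r, gapChart F x r = y := by
  obtain ⟨G, hG, hfix, hcG, hchart⟩ := exists_gapChart_eq_orbitCoord hF hlow hhigh hx
  rw [hchart]
  have hgap := gap_congr hfix
  exact exists_orbitCoord_eq hG (hgap ▸ gapMid_mem_gap (mem_gap_self hF hlow hhigh hx)) hcG
    (hgap ▸ hy)

lemma flow_gapChart (hx : ¬IsFixedPt F x) (r s : ℝ) :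
    flow F s (gapChart F x r) = gapChart F x (r + gapSign F x * s) := by
  have hy := gapChart_mem_gap hF hlow hhigh hx r
  obtain ⟨hchart, hsign⟩ := gapChart_eq_of_mem_gap hF hlow hhigh hy
  rw [flow, if_neg (not_isFixedPt_of_mem_gap hy), hchart, hsign,
    leftInverse_invFun (strictMono_gapChart hF hlow hhigh hx).injective]

lemma flow_mem_gap (hx : ¬IsFixedPt F x) (s : ℝ) : flow F s x ∈ gap F x := by
  rw [flow, if_neg hx]
  exact gapChart_mem_gap hF hlow hhigh hx _

lemma flow_flow (s t x : ℝ) : flow F s (flow F t x) = flow F (t + s) x := by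
  by_cases hx : IsFixedPt F x
  · simp only [flow_of_isFixedPt hx]
  obtain ⟨r, hr⟩ := exists_gapChart_eq hF hlow hhigh hx (mem_gap_self hF hlow hhigh hx)
  rw [← hr, flow_gapChart hF hlow hhigh hx, flow_gapChart hF hlow hhigh hx,
    flow_gapChart hF hlow hhigh hx, add_assoc, mul_add]

lemma flow_zero (x : ℝ) : flow F 0 x = x := by
  by_cases hx : IsFixedPt F x
  · exact flow_of_isFixedPt hx 0
  obtain ⟨r, hr⟩ := exists_gapChart_eq hF hlow hhigh hx (mem_gap_self hF hlow hhigh hx)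
  rw [← hr, flow_gapChart hF hlow hhigh hx, mul_zero, add_zero]

lemma flow_one (x : ℝ) : flow F 1 x = F x := by
  by_cases hx : IsFixedPt F x
  · rw [flow_of_isFixedPt hx, hx.eq]
  obtain ⟨r, hr⟩ := exists_gapChart_eq hF hlow hhigh hx (mem_gap_self hF hlow hhigh hx)
  rw [← hr, flow_gapChart hF hlow hhigh hx, mul_one, gapChart_add_gapSign]

lemma flow_iterate (s : ℝ) (m : ℕ) : (flow F s)^[m] = flow F (m * s) := by
  induction m with
  | zero => funext x; simp [flow_zero hF hlow hhigh]
  | succ m ih =>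
    funext x
    rw [iterate_succ_apply', ih, flow_flow hF hlow hhigh]
    push_cast
    ring_nf

lemma strictMono_flow (s : ℝ) : StrictMono (flow F s) := by
  intro x y hxy
  by_cases hx : IsFixedPt F x <;> by_cases hy : IsFixedPt F y
  · rwa [flow_of_isFixedPt hx, flow_of_isFixedPt hy]
  · rw [flow_of_isFixedPt hx]
    exact (le_lowerFixedPt hx hxy.le).trans_lt (flow_mem_gap hF hlow hhigh hy s).1
  · rw [flow_of_isFixedPt hy]
    exact (flow_mem_gap hF hlow hhigh hx s).2.trans_le (upperFixedPt_le hy hxy.le)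
  by_cases hyx : y ∈ gap F x
  · obtain ⟨r, hr⟩ := exists_gapChart_eq hF hlow hhigh hx (mem_gap_self hF hlow hhigh hx)
    obtain ⟨r', hr'⟩ := exists_gapChart_eq hF hlow hhigh hx hyx
    have hmono := strictMono_gapChart hF hlow hhigh hx
    rw [← hr, ← hr'] at hxy ⊢
    rw [flow_gapChart hF hlow hhigh hx, flow_gapChart hF hlow hhigh hx]
    exact hmono (by linarith [hmono.lt_iff_lt.1 hxy])
  · have hsep : upperFixedPt F x ≤ lowerFixedPt F y :=
      le_lowerFixedPt (isFixedPt_upperFixedPt hF hhigh x)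
        (not_lt.1 fun h => hyx ⟨(mem_gap_self hF hlow hhigh hx).1.trans hxy, h⟩)
    exact ((flow_mem_gap hF hlow hhigh hx s).2.trans_le hsep).trans
      (flow_mem_gap hF hlow hhigh hy s).1

theorem exists_pow_eq_of_unbounded_fixedPoints {n : ℕ} (hn : 0 < n) :
    ∃ G : Perm ℝ, StrictMono G ∧ G ^ n = F ∧ fixedPoints F ⊆ fixedPoints G := by
  refine ⟨⟨flow F (1 / n), flow F (-(1 / n)), fun x => ?_, fun x => ?_⟩,
    strictMono_flow hF hlow hhigh _, ?_, fun x hx => flow_of_isFixedPt hx _⟩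
  · rw [flow_flow hF hlow hhigh, add_neg_cancel, flow_zero hF hlow hhigh]
  · rw [flow_flow hF hlow hhigh, neg_add_cancel, flow_zero hF hlow hhigh]
  · ext x
    rw [coe_pow]
    change (flow F (1 / n))^[n] x = F x
    rw [flow_iterate hF hlow hhigh, mul_one_div_cancel (Nat.cast_ne_zero.2 hn.ne'),
      flow_one hF hlow hhigh]

end Unbounded

end Real

end Equiv.Perm

open Equiv.Perm in
/-- Homeo⁺(I): strictly increasing bijections of [0,1] (such a map is automatically a
homeomorphism fixing the endpoints).  Every such map has an n-th root for every n > 0. -/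
theorem exists_nth_root_homeoI (f : Equiv.Perm (Set.Icc (0:ℝ) 1)) (hf : StrictMono f)
    (n : ℕ) (hn : 0 < n) :
    ∃ g : Equiv.Perm (Set.Icc (0:ℝ) 1), StrictMono g ∧ g ^ n = f := by
  have hfix : ∀ x ∉ Icc (0:ℝ) 1, IsFixedPt (ofSubtype f) x :=
    fun x hx => ofSubtype_apply_of_not_mem f hx
  obtain ⟨G, hG, hGn, hGfix⟩ := exists_pow_eq_of_unbounded_fixedPoints
    (strictMono_ofSubtype_Icc hf)
    (not_bddBelow_iff.2 fun x => ⟨min x 0 - 1, hfix _ fun h => by linarith [h.1, min_le_right x 0],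
      by linarith [min_le_left x 0]⟩)
    (not_bddAbove_iff.2 fun x => ⟨max x 1 + 1, hfix _ fun h => by linarith [h.2, le_max_right x 1],
      by linarith [le_max_left x 1]⟩) hn
  have hsupp : ∀ x, G x ≠ x → x ∈ Icc (0:ℝ) 1 :=
    fun x hx => by_contra fun h => hx (hGfix (hfix x h))
  have hGI : ∀ x, G x ∈ Icc (0:ℝ) 1 ↔ x ∈ Icc (0:ℝ) 1 := fun x => by
    by_cases hx : G x = x
    · rw [hx]
    · exact iff_of_true (hsupp _ fun h => hx (G.injective h)) (hsupp x hx)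
  refine ⟨G.subtypePerm hGI, fun x y h => hG h, ofSubtype_injective ?_⟩
  rw [map_pow, ofSubtype_subtypePerm hGI hsupp, hGn]
end

section
/- For every integer n ≥ 2, the set of orientation-preserving homeomorphisms g of ℝ satisfying g^n = τ, where τ(x) = x + 1 is translation by one, is uncountable. -/
/-!
Let `r` be translation by `1/n`, so `r ^ n = τ`. Any increasing homeomorphism `h` commuting with
`τ` gives another increasing `n`-th root `h r h⁻¹` of `τ`. The maps `h_a x = x + a |sin (π x)|`,
`|a| < 1/π`, are such homeomorphisms (the perturbation is `1`-periodic with Lipschitz constant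
`|a| π < 1`), and since `h_a` fixes `0`, the root `h_a r h_a⁻¹` sends `0` to
`1/n + a sin (π/n)`, which determines `a` once `n ≥ 2`.
-/

open Real Set Filter Function

theorem Equiv.addRight_pow {α : Type*} [AddGroup α] (c : α) (m : ℕ) :
    Equiv.addRight c ^ m = Equiv.addRight (m • c) := by
  induction m with
  | zero => simp
  | succ m ih => rw [pow_succ, ih, succ_nsmul', Equiv.addRight_add]

theorem conj_pow_eq_of_commute {G : Type*} [Group G] {h r t : G} {n : ℕ} (hr : r ^ n = t)
    (ht : Commute h t) : (h * r * h⁻¹) ^ n = t := by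
  rw [conj_pow, hr, ht.eq, mul_inv_cancel_right]

theorem OrderIso.strictMono_conj {α : Type*} [Preorder α] (e : α ≃o α) {r : Equiv.Perm α}
    (hr : StrictMono r) : StrictMono ⇑(e.toEquiv * r * e.toEquiv⁻¹) :=
  e.strictMono.comp (hr.comp e.symm.strictMono)

section AddPerturbation

variable {p : ℝ → ℝ}

theorem strictMono_add_of_lipschitzWith {K : NNReal} (hp : LipschitzWith K p) (hK : K < 1) :
    StrictMono fun x => x + p x := by
  intro x y hxy
  have hdist := hp.dist_le_mul y x
  rw [Real.dist_eq, Real.dist_eq, abs_of_pos (sub_pos.2 hxy)] at hdist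
  have hK' : (K : ℝ) < 1 := hK
  nlinarith [neg_abs_le (p y - p x)]

theorem surjective_add_of_abs_le {C : ℝ} (hp : Continuous p) (hC : ∀ x, |p x| ≤ C) :
    Surjective fun x => x + p x :=
  (continuous_id.add hp).surjective
    (tendsto_atTop_add_right_of_le _ (-C) tendsto_id fun x => neg_le_of_abs_le (hC x))
    (tendsto_atBot_add_right_of_ge _ C tendsto_id fun x => le_of_abs_le (hC x))

noncomputable def orderIsoAddOfLipschitzWith {K : NNReal} {C : ℝ} (hp : LipschitzWith K p)
    (hK : K < 1) (hC : ∀ x, |p x| ≤ C) : ℝ ≃o ℝ :=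
  StrictMono.orderIsoOfSurjective _ (strictMono_add_of_lipschitzWith hp hK)
    (surjective_add_of_abs_le hp.continuous hC)

@[simp]
theorem orderIsoAddOfLipschitzWith_apply {K : NNReal} {C : ℝ} (hp : LipschitzWith K p)
    (hK : K < 1) (hC : ∀ x, |p x| ≤ C) (x : ℝ) :
    orderIsoAddOfLipschitzWith hp hK hC x = x + p x :=
  rfl

theorem commute_orderIsoAddOfLipschitzWith_addRight {K : NNReal} {C c : ℝ}
    (hp : LipschitzWith K p) (hK : K < 1) (hC : ∀ x, |p x| ≤ C) (hper : Periodic p c) :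
    Commute (orderIsoAddOfLipschitzWith hp hK hC).toEquiv (Equiv.addRight c) := by
  ext x
  simp only [Equiv.Perm.mul_apply, Equiv.coe_addRight, OrderIso.coe_toEquiv,
    orderIsoAddOfLipschitzWith_apply, hper x]
  ring

end AddPerturbation

theorem lipschitzWith_mul_abs_sin_mul (a c : ℝ) :
    LipschitzWith (‖a‖₊ * ‖c‖₊) fun x => a * |sin (c * x)| := by
  simpa [Function.comp_def] using (lipschitzWith_smul a).comp
    ((lipschitzWith_one_norm.comp lipschitzWith_sin).comp (lipschitzWith_smul c))

theorem periodic_mul_abs_sin_pi_mul (a : ℝ) : Periodic (fun x => a * |sin (π * x)|) 1 := by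
  intro x
  simp only [mul_add, mul_one, sin_add_pi, abs_neg]

theorem nnnorm_mul_nnnorm_pi_lt_one {a : ℝ} (ha : |a| < π⁻¹) : ‖a‖₊ * ‖π‖₊ < 1 := by
  rw [← NNReal.coe_lt_coe, NNReal.coe_mul, coe_nnnorm, coe_nnnorm, Real.norm_eq_abs,
    Real.norm_eq_abs, abs_of_pos pi_pos, NNReal.coe_one, ← lt_mul_inv_iff₀ pi_pos, one_mul]
  exact ha

noncomputable def addAbsSin (a : ℝ) (ha : |a| < π⁻¹) : ℝ ≃o ℝ :=
  orderIsoAddOfLipschitzWith (lipschitzWith_mul_abs_sin_mul a π) (nnnorm_mul_nnnorm_pi_lt_one ha)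
    (C := |a|) fun x => by
      rw [abs_mul, abs_abs]
      exact mul_le_of_le_one_right (abs_nonneg a) (abs_sin_le_one _)

theorem addAbsSin_apply (a : ℝ) (ha : |a| < π⁻¹) (x : ℝ) :
    addAbsSin a ha x = x + a * |sin (π * x)| :=
  rfl

theorem commute_addAbsSin_addRight_one (a : ℝ) (ha : |a| < π⁻¹) :
    Commute (addAbsSin a ha).toEquiv (Equiv.addRight 1) :=
  commute_orderIsoAddOfLipschitzWith_addRight _ _ _ (periodic_mul_abs_sin_pi_mul a)

theorem addAbsSin_conj_addRight_apply_zero (a : ℝ) (ha : |a| < π⁻¹) (c : ℝ) :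
    ((addAbsSin a ha).toEquiv * Equiv.addRight c * (addAbsSin a ha).toEquiv⁻¹) 0 =
      c + a * |sin (π * c)| := by
  have hfix : (addAbsSin a ha).symm 0 = 0 := by
    rw [OrderIso.symm_apply_eq, addAbsSin_apply]
    simp
  simp [Equiv.Perm.inv_def, hfix, addAbsSin_apply]

/-- The set of orientation-preserving homeomorphisms (= strictly increasing bijections)
`g` of `ℝ` with `g ^ n = τ`, where `τ` is translation by one, is uncountable for `n ≥ 2`. -/
theorem uncountable_nth_roots_of_translation (n : ℕ) (hn : 2 ≤ n)
    (τ : Equiv.Perm ℝ) (hτ : ∀ x, τ x = x + 1) :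
    ¬ ({g : Equiv.Perm ℝ | StrictMono g ∧ g ^ n = τ}).Countable := by
  obtain rfl : τ = Equiv.addRight 1 := Equiv.ext hτ
  set r := Equiv.addRight ((n : ℝ)⁻¹)
  have hr : r ^ n = Equiv.addRight 1 := by
    rw [Equiv.addRight_pow, nsmul_eq_mul, mul_inv_cancel₀ (by positivity)]
  let root (a : Ioo (-π⁻¹) π⁻¹) : Equiv.Perm ℝ :=
    (addAbsSin a (abs_lt.2 a.2)).toEquiv * r * (addAbsSin a (abs_lt.2 a.2)).toEquiv⁻¹
  have hsin : 0 < |sin (π * (n : ℝ)⁻¹)| := by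
    have hn' : (1 : ℝ) < n := by exact_mod_cast hn
    exact abs_pos_of_pos (sin_pos_of_pos_of_lt_pi (by positivity)
      (mul_lt_of_lt_one_right pi_pos (inv_lt_one_of_one_lt₀ hn')))
  have root_injective : Injective root := fun a b hab => by
    have h0 := congrArg (· 0) hab
    simp only [root, addAbsSin_conj_addRight_apply_zero, r] at h0
    exact Subtype.ext (mul_right_cancel₀ hsin.ne' (add_left_cancel h0))
  have root_mem (a) : root a ∈ {g : Equiv.Perm ℝ | StrictMono g ∧ g ^ n = Equiv.addRight 1} :=
    ⟨OrderIso.strictMono_conj _ fun _ _ h => add_lt_add_left h _,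
      conj_pow_eq_of_commute hr (commute_addAbsSin_addRight_one _ _)⟩
  intro hS
  have := hS.to_subtype
  have hcount : (Ioo (-π⁻¹) π⁻¹).Countable :=
    countable_coe_iff.1 ((injective_codRestrict root_mem).2 root_injective).countable
  rw [Cardinal.Real.Ioo_countable_iff] at hcount
  linarith [inv_pos.2 pi_pos]
end

section
/- Let ψ be a homeomorphism of ℝ, not the identity, whose support is contained in (0,1), and let τ(x) = x+1. Then the subgroup ⟨ψ, τ⟩ of Homeo⁺(ℝ) is isomorphic to the lamplighter group ℤ ≀ ℤ = ℤ ⋉ (⊕_{i∈ℤ} ℤ), where ℤ acts by shifting indices. -/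
/-- The shift automorphism of `⊕_{i∈ℤ} ℤ`, written multiplicatively. -/
noncomputable def lampShift : MulAut (Multiplicative (ℤ →₀ ℤ)) :=
  AddEquiv.toMultiplicative (Finsupp.domCongr (Equiv.addRight (1 : ℤ)))

/-- The homomorphism `ℤ → Aut(⊕_{i∈ℤ} ℤ)` sending `1` to the shift. -/
noncomputable def lampAction : Multiplicative ℤ →* MulAut (Multiplicative (ℤ →₀ ℤ)) :=
  zpowersHom _ lampShift

/-- The lamplighter group `ℤ ≀ ℤ = ℤ ⋉ (⊕_{i∈ℤ} ℤ)`. -/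
abbrev Lamplighter := SemidirectProduct (Multiplicative (ℤ →₀ ℤ)) (Multiplicative ℤ) lampAction

/-! The conjugates `ψᵢ = τⁱ ψ τ⁻ⁱ` are supported in the pairwise disjoint intervals `(i, i+1)`,
so they commute and `f ↦ ∏ ψᵢ ^ f i` is a homomorphism from `⊕_{i∈ℤ} ℤ` which conjugation by `τ`
intertwines with the shift; together with `n ↦ τⁿ` it gives a homomorphism from `ℤ ≀ ℤ` onto
`⟨ψ, τ⟩`. It is injective: `∏ ψᵢ ^ f i` fixes the integers, so evaluating `(∏ ψᵢ ^ f i) τⁿ` at `0`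
forces `n = 0`; and on `(i, i+1)` the product acts as `ψᵢ ^ f i`, which moves the translate of any
point moved by `ψ` unless `f i = 0`, because an increasing bijection of `ℝ` has no periodic points
other than its fixed points. -/

open Equiv Set

section ZPowLift

variable {ι G : Type*} [Group G] (g : ι → G) (hg : ∀ i j, Commute (g i) (g j))

open scoped IsMulCommutative in
noncomputable def zpowLift : Multiplicative (ι →₀ ℤ) →* G :=
  have : IsMulCommutative (Subgroup.closure (range g)) :=
    Subgroup.isMulCommutative_closure (by rintro _ ⟨i, rfl⟩ _ ⟨j, rfl⟩; exact hg i j)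
  (Subgroup.closure (range g)).subtype.comp <| AddMonoidHom.toMultiplicativeLeft <|
    Finsupp.liftAddHom fun i =>
      (zpowersHom _ ⟨g i, Subgroup.subset_closure ⟨i, rfl⟩⟩).toAdditiveRight

@[simp]
lemma zpowLift_single (i : ι) (a : ℤ) :
    zpowLift g hg (.ofAdd (Finsupp.single i a)) = g i ^ a := by
  simp [zpowLift]

lemma zpowLift_mem {S : Subgroup G} {f : ι →₀ ℤ} (hS : ∀ i ∈ f.support, g i ∈ S) :
    zpowLift g hg (.ofAdd f) ∈ S := by
  induction f using Finsupp.induction with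
  | zero => exact S.one_mem
  | single_add i a f hi ha ih =>
    rw [Finsupp.support_single_add hi ha] at hS
    rw [ofAdd_add, map_mul, zpowLift_single]
    exact mul_mem (zpow_mem (hS i (Finset.mem_cons_self _ _)) _)
      (ih fun j hj => hS j (Finset.mem_cons_of_mem hj))

end ZPowLift

lemma lampAction_single (n : Multiplicative ℤ) (i a : ℤ) :
    lampAction n (.ofAdd (Finsupp.single i a)) = .ofAdd (Finsupp.single (i + n.toAdd) a) := by
  have hshift (j : ℤ) :
      lampShift (.ofAdd (Finsupp.single j a)) = .ofAdd (Finsupp.single (j + 1) a) := by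
    simp [lampShift]
  rw [lampAction, zpowersHom_apply]
  induction n.toAdd using Int.induction_on generalizing i with
  | zero => simp
  | succ n ih =>
    rw [zpow_add_one, MulAut.mul_apply, hshift, ih, add_right_comm, add_assoc]
  | pred n ih =>
    have := ih (i - 1)
    rw [show -(n : ℤ) = -n - 1 + 1 by ring, zpow_add_one, MulAut.mul_apply, hshift,
      sub_add_cancel] at this
    rw [this]
    ring_nf

lemma Equiv.Perm.zpow_apply_eq_add {α : Type*} [AddCommGroupWithOne α] {τ : Perm α}
    (hτ : ∀ x, τ x = x + 1) (n : ℤ) (x : α) : (τ ^ n) x = x + n := by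
  have hinv (x : α) : τ⁻¹ x = x - 1 := Perm.inv_eq_iff_eq.mpr (by rw [hτ, sub_add_cancel])
  induction n using Int.induction_on generalizing x with
  | zero => simp
  | succ n ih => rw [zpow_add_one, Perm.mul_apply, hτ, ih]; push_cast; abel
  | pred n ih => rw [zpow_sub_one, Perm.mul_apply, hinv, ih]; push_cast; abel

lemma Equiv.Perm.zpow_apply_eq_self_iff_of_strictMono {α : Type*} [LinearOrder α] {g : Perm α}
    (hg : StrictMono g) {n : ℤ} (hn : n ≠ 0) {x : α} : (g ^ n) x = x ↔ g x = x := by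
  have key : ∀ m : ℕ, 0 < m → ((g ^ m) x = x ↔ g x = x) := fun m hm => by
    simpa [Perm.coe_pow] using
      (Function.Commute.id_right (f := g)).iterate_pos_eq_iff_map_eq hg.monotone strictMono_id hm
  rcases Int.natAbs_eq n with h | h <;> rw [h]
  · exact_mod_cast key _ (by omega)
  · rw [zpow_neg, Perm.inv_eq_iff_eq, eq_comm, zpow_natCast, key _ (by omega)]

section LamplighterLift

variable {G : Type*} [Group G] (ψ τ : G)
  (hcomm : ∀ i j : ℤ, Commute (MulAut.conj (τ ^ i) ψ) (MulAut.conj (τ ^ j) ψ))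

noncomputable def lamplighterLift : Lamplighter →* G :=
  SemidirectProduct.lift (zpowLift _ hcomm) (zpowersHom G τ) fun n =>
    Finsupp.mulHom_ext fun i a => by
      simp only [MonoidHom.comp_apply, MulEquiv.coe_toMonoidHom, lampAction_single,
        zpowLift_single, zpowersHom_apply, ← map_zpow, ← MulAut.mul_apply, ← map_mul, ← zpow_add,
        add_comm]

lemma lamplighterLift_apply (x : Lamplighter) :
    lamplighterLift ψ τ hcomm x = zpowLift _ hcomm (x.left) * τ ^ x.right.toAdd :=
  rfl

lemma range_lamplighterLift : (lamplighterLift ψ τ hcomm).range = Subgroup.closure {ψ, τ} := by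
  have hψ : ψ ∈ Subgroup.closure {ψ, τ} := Subgroup.subset_closure (by simp)
  have hτ : τ ∈ Subgroup.closure {ψ, τ} := Subgroup.subset_closure (by simp)
  apply le_antisymm
  · rintro _ ⟨x, rfl⟩
    refine mul_mem (zpowLift_mem _ hcomm fun i _ => ?_) (zpow_mem hτ _)
    rw [MulAut.conj_apply]
    exact mul_mem (mul_mem (zpow_mem hτ i) hψ) (inv_mem (zpow_mem hτ i))
  · rw [Subgroup.closure_le, insert_subset_iff, singleton_subset_iff]
    constructor
    · exact ⟨.inl (.ofAdd (Finsupp.single 0 1)), by simp [lamplighterLift]⟩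
    · exact ⟨.inr (.ofAdd 1), by simp [lamplighterLift]⟩

end LamplighterLift

lemma Equiv.Perm.disjoint_of_mem_fixingSubgroup_compl {α : Type*} {f g : Perm α} {s t : Set α}
    (hst : _root_.Disjoint s t) (hf : f ∈ fixingSubgroup (Perm α) sᶜ)
    (hg : g ∈ fixingSubgroup (Perm α) tᶜ) : f.Disjoint g := fun x => by
  by_cases hx : x ∈ s
  · exact .inr ((mem_fixingSubgroup_iff _).mp hg x (hst.notMem_of_mem_left hx))
  · exact .inl ((mem_fixingSubgroup_iff _).mp hf x hx)

section Real

variable {ψ τ : Perm ℝ}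

lemma conj_zpow_mem_fixingSubgroup (hτ : ∀ x, τ x = x + 1)
    (hψ : ψ ∈ fixingSubgroup (Perm ℝ) (Ioo (0 : ℝ) 1)ᶜ) (i : ℤ) :
    MulAut.conj (τ ^ i) ψ ∈ fixingSubgroup (Perm ℝ) (Ioo (i : ℝ) (i + 1))ᶜ := by
  refine Set.conj_mem_fixingSubgroup ?_ hψ
  have : (τ ^ i • · : ℝ → ℝ) = (· + (i : ℝ)) := funext (Perm.zpow_apply_eq_add hτ i)
  rw [smul_set_compl, ← image_smul, this, image_add_const_Ioo, zero_add, add_comm]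

lemma commute_conj_zpow (hτ : ∀ x, τ x = x + 1)
    (hψ : ψ ∈ fixingSubgroup (Perm ℝ) (Ioo (0 : ℝ) 1)ᶜ) (i j : ℤ) :
    Commute (MulAut.conj (τ ^ i) ψ) (MulAut.conj (τ ^ j) ψ) := by
  rcases eq_or_ne i j with rfl | hij
  · exact .refl _
  · exact (Perm.disjoint_of_mem_fixingSubgroup_compl (pairwise_disjoint_Ioo_intCast ℝ hij)
      (conj_zpow_mem_fixingSubgroup hτ hψ i) (conj_zpow_mem_fixingSubgroup hτ hψ j)).commute

lemma zpowLift_conj_zpow_apply_intCast (hτ : ∀ x, τ x = x + 1)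
    (hψ : ψ ∈ fixingSubgroup (Perm ℝ) (Ioo (0 : ℝ) 1)ᶜ) (f : Multiplicative (ℤ →₀ ℤ)) (m : ℤ) :
    zpowLift _ (commute_conj_zpow hτ hψ) f m = m := by
  have hints (i : ℤ) : range ((↑) : ℤ → ℝ) ⊆ (Ioo (i : ℝ) (i + 1))ᶜ := by
    rintro _ ⟨n, rfl⟩ ⟨h1, h2⟩
    have : i < n := by exact_mod_cast h1
    have : n < i + 1 := by exact_mod_cast h2
    omega
  have hfix : zpowLift _ (commute_conj_zpow hτ hψ) (.ofAdd f.toAdd) ∈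
      fixingSubgroup (Perm ℝ) (range ((↑) : ℤ → ℝ)) :=
    zpowLift_mem _ _ fun i _ =>
      fixingSubgroup_antitone _ _ (hints i) (conj_zpow_mem_fixingSubgroup hτ hψ i)
  exact hfix ⟨m, mem_range_self m⟩

lemma zpowLift_conj_zpow_apply_add (hτ : ∀ x, τ x = x + 1)
    (hψ : ψ ∈ fixingSubgroup (Perm ℝ) (Ioo (0 : ℝ) 1)ᶜ) (f : ℤ →₀ ℤ) (i : ℤ) {x : ℝ}
    (hx : x ∈ Ioo 0 1) :
    zpowLift _ (commute_conj_zpow hτ hψ) (.ofAdd f) (x + i) = (ψ ^ f i) x + i := by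
  have hxi : x + i ∈ Ioo (i : ℝ) (i + 1) := ⟨by linarith [hx.1], by linarith [hx.2]⟩
  have hrest : zpowLift _ (commute_conj_zpow hτ hψ) (.ofAdd (f.erase i)) ∈
      fixingSubgroup (Perm ℝ) (Ioo (i : ℝ) (i + 1)) := by
    refine zpowLift_mem _ _ fun j hj => fixingSubgroup_antitone _ _ ?_
      (conj_zpow_mem_fixingSubgroup hτ hψ j)
    rw [Finsupp.support_erase] at hj
    exact (pairwise_disjoint_Ioo_intCast ℝ (Finset.ne_of_mem_erase hj)).subset_compl_left
  have hfix := (mem_fixingSubgroup_iff _).mp hrest _ hxi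
  rw [Perm.smul_def] at hfix
  conv_lhs => rw [← f.single_add_erase i]
  rw [ofAdd_add, map_mul, Perm.mul_apply, hfix, zpowLift_single, ← map_zpow,
    MulAut.conj_apply, Perm.mul_apply, Perm.mul_apply, ← zpow_neg, Perm.zpow_apply_eq_add hτ,
    Perm.zpow_apply_eq_add hτ]
  push_cast
  ring_nf

lemma zpowLift_conj_zpow_injective (hτ : ∀ x, τ x = x + 1)
    (hψ : ψ ∈ fixingSubgroup (Perm ℝ) (Ioo (0 : ℝ) 1)ᶜ) (hmono : StrictMono ψ) (hne : ψ ≠ 1) :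
    Function.Injective (zpowLift _ (commute_conj_zpow hτ hψ)) := by
  obtain ⟨x, hx⟩ := DFunLike.ne_iff.mp hne
  have hxI : x ∈ Ioo (0 : ℝ) 1 := by_contra fun h => hx ((mem_fixingSubgroup_iff _).mp hψ x h)
  rw [injective_iff_map_eq_one]
  intro f hf
  ext i
  by_contra hfi
  have := congr($hf (x + i))
  rw [← ofAdd_toAdd f, zpowLift_conj_zpow_apply_add hτ hψ _ i hxI, Perm.one_apply,
    add_left_inj, Perm.zpow_apply_eq_self_iff_of_strictMono hmono hfi] at this
  exact hx this

lemma lamplighterLift_injective (hτ : ∀ x, τ x = x + 1)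
    (hψ : ψ ∈ fixingSubgroup (Perm ℝ) (Ioo (0 : ℝ) 1)ᶜ) (hmono : StrictMono ψ) (hne : ψ ≠ 1) :
    Function.Injective (lamplighterLift ψ τ (commute_conj_zpow hτ hψ)) := by
  rw [injective_iff_map_eq_one]
  intro x h
  rw [lamplighterLift_apply] at h
  have hright : x.right = 1 := by
    have := congr($h 0)
    rw [Perm.mul_apply, Perm.zpow_apply_eq_add hτ, zero_add,
      zpowLift_conj_zpow_apply_intCast hτ hψ, Perm.one_apply, Int.cast_eq_zero] at this
    exact toAdd_eq_zero.mp this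
  rw [hright, toAdd_one, zpow_zero, mul_one,
    ← map_one (zpowLift _ (commute_conj_zpow hτ hψ))] at h
  exact SemidirectProduct.ext (zpowLift_conj_zpow_injective hτ hψ hmono hne h) hright

end Real

/-- If `ψ ≠ 1` is an increasing homeomorphism of `ℝ` supported in `(0,1)` and `τ` is the
translation by one, then `⟨ψ, τ⟩` is isomorphic to the lamplighter group `ℤ ≀ ℤ`. -/
theorem lamplighter_realization (ψ τ : Equiv.Perm ℝ)
    (hψmono : StrictMono ψ) (hψ : ψ ≠ 1) (hsupp : {x : ℝ | ψ x ≠ x} ⊆ Set.Ioo 0 1)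
    (hτ : ∀ x, τ x = x + 1) :
    Nonempty ((Subgroup.closure {ψ, τ} : Subgroup (Equiv.Perm ℝ)) ≃* Lamplighter) := by
  have hψfix : ψ ∈ fixingSubgroup (Perm ℝ) (Ioo (0 : ℝ) 1)ᶜ :=
    (mem_fixingSubgroup_iff _).mpr fun x hx => by_contra fun h => hx (hsupp h)
  exact ⟨(MulEquiv.subgroupCongr (range_lamplighterLift ψ τ _).symm).trans
    (MonoidHom.ofInjective (lamplighterLift_injective hτ hψfix hψmono hψ)).symm⟩
end

section
/- Every countable left-orderable group embeds into the group Homeo⁺(ℝ) of orientation-preserving homeomorphisms of the real line. -/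
/-!
Order `G ×ₗ ℚ` lexicographically. It is a countable dense linear order without endpoints, and
left multiplication on the first coordinate is a faithful action of `G` by order automorphisms.
By Cantor's back-and-forth theorem `G ×ₗ ℚ ≃o ℚ`, so `G` embeds into `ℚ ≃o ℚ`. Finally every
order automorphism of `ℚ` extends uniquely to a monotone map of `ℝ` (take suprema over the
rationals below a point), and uniqueness makes this extension a group homomorphism into `ℝ ≃o ℝ`.
-/

/-- A group is left orderable if it admits a strict total order invariant under
left multiplication. -/
def IsLeftOrderable (G : Type*) [Group G] : Prop :=
  ∃ r : G → G → Prop, IsStrictTotalOrder G r ∧ ∀ g h₁ h₂ : G, r h₁ h₂ → r (g * h₁) (g * h₂)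

namespace OrderIso

section ExtendToReal

noncomputable def extendToReal (f : ℚ ≃o ℚ) (x : ℝ) : ℝ :=
  sSup ((fun q : ℚ => (f q : ℝ)) '' {q : ℚ | (q : ℝ) < x})

variable (f : ℚ ≃o ℚ)

lemma bddAbove_image_lt_real (x : ℝ) :
    BddAbove ((fun q : ℚ => (f q : ℝ)) '' {q : ℚ | (q : ℝ) < x}) := by
  obtain ⟨p, hxp⟩ := exists_rat_gt x
  refine ⟨f p, ?_⟩
  rintro _ ⟨q, hqx, rfl⟩
  have hqp : q ≤ p := by exact_mod_cast (hqx.trans hxp).le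
  show (f q : ℝ) ≤ f p
  exact_mod_cast f.monotone hqp

lemma le_extendToReal {q : ℚ} {x : ℝ} (hqx : (q : ℝ) < x) : (f q : ℝ) ≤ f.extendToReal x :=
  le_csSup (f.bddAbove_image_lt_real x) ⟨q, hqx, rfl⟩

lemma extendToReal_le {x y : ℝ} (h : ∀ q : ℚ, (q : ℝ) < x → (f q : ℝ) ≤ y) :
    f.extendToReal x ≤ y := by
  obtain ⟨q, hqx⟩ := exists_rat_lt x
  refine csSup_le ⟨_, q, hqx, rfl⟩ ?_
  rintro _ ⟨p, hpx, rfl⟩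
  exact h p hpx

lemma monotone_extendToReal : Monotone f.extendToReal := fun _ _ hxy =>
  f.extendToReal_le fun _ hqx => f.le_extendToReal (hqx.trans_le hxy)

@[simp]
lemma extendToReal_coe (q : ℚ) : f.extendToReal q = f q := by
  refine le_antisymm (f.extendToReal_le fun p hpq => ?_) (le_of_forall_lt fun y hy => ?_)
  · exact_mod_cast f.monotone (by exact_mod_cast hpq.le : p ≤ q)
  · obtain ⟨r, hyr, hrq⟩ := exists_rat_btwn hy
    have hr : f.symm r < q := f.symm_apply_lt.2 (by exact_mod_cast hrq)
    calc y < r := hyr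
      _ = f (f.symm r) := by rw [apply_symm_apply]
      _ ≤ f.extendToReal q := f.le_extendToReal (by exact_mod_cast hr)

/-- A rational `r` strictly between `f.extendToReal x` and `F x` would be `f p` for some `p`,
and neither `p < x` nor `x ≤ p` is possible. -/
lemma eq_extendToReal {F : ℝ → ℝ} (hF : Monotone F) (hFf : ∀ q : ℚ, F q = f q) :
    F = f.extendToReal := by
  funext x
  refine le_antisymm (le_of_not_gt fun hlt => ?_) (f.extendToReal_le fun q hqx => ?_)
  · obtain ⟨r, hr, hrF⟩ := exists_rat_btwn hlt
    rcases lt_or_ge ((f.symm r : ℚ) : ℝ) x with hx | hx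
    · have := f.le_extendToReal hx
      rw [apply_symm_apply] at this
      exact hr.not_ge this
    · have := hF hx
      rw [hFf, apply_symm_apply] at this
      exact hrF.not_ge this
  · rw [← hFf]
    exact hF hqx.le

lemma extendToReal_one : (1 : ℚ ≃o ℚ).extendToReal = id :=
  (eq_extendToReal 1 monotone_id fun _ => rfl).symm

lemma extendToReal_mul (g : ℚ ≃o ℚ) :
    (f * g).extendToReal = f.extendToReal ∘ g.extendToReal :=
  (eq_extendToReal _ (f.monotone_extendToReal.comp g.monotone_extendToReal)
    fun q => by simp [RelIso.mul_apply]).symm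

noncomputable def extendToRealHom : (ℚ ≃o ℚ) →* (ℝ ≃o ℝ) where
  toFun f := Equiv.toOrderIso
    { toFun := f.extendToReal
      invFun := f⁻¹.extendToReal
      left_inv x := by simpa [extendToReal_one] using (congrFun (extendToReal_mul f⁻¹ f) x).symm
      right_inv x := by simpa [extendToReal_one] using (congrFun (extendToReal_mul f f⁻¹) x).symm }
    f.monotone_extendToReal f⁻¹.monotone_extendToReal
  map_one' := by ext x; simp [extendToReal_one]
  map_mul' f g := by ext x; simp [extendToReal_mul]

lemma extendToRealHom_injective : Function.Injective extendToRealHom := fun f g hfg => by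
  ext q
  simpa [extendToRealHom] using congrArg (fun e : ℝ ≃o ℝ => e q) hfg

end ExtendToReal

variable {α β : Type*} [Preorder α] [Preorder β]

def conjMulEquiv (e : α ≃o β) : (α ≃o α) ≃* (β ≃o β) where
  toFun f := e.symm.trans (f.trans e)
  invFun f := e.trans (f.trans e.symm)
  left_inv f := by ext; simp
  right_inv f := by ext; simp
  map_mul' f g := by ext; simp [RelIso.mul_apply]

def toPermHom : (α ≃o α) →* Equiv.Perm α where
  toFun := RelIso.toEquiv
  map_one' := rfl
  map_mul' _ _ := rfl

lemma toPermHom_injective : Function.Injective (toPermHom (α := α)) :=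
  RelIso.toEquiv_injective

end OrderIso

def lexMulLeftHom (G β : Type*) [Group G] [Preorder G] [MulLeftMono G] [Preorder β] :
    G →* (G ×ₗ β ≃o G ×ₗ β) where
  toFun g := Prod.Lex.prodLexCongr (OrderIso.mulLeft g) (OrderIso.refl β)
  map_one' := RelIso.ext fun _ => by simp [Prod.map, RelIso.one_apply]
  map_mul' _ _ := RelIso.ext fun _ => by simp [Prod.map, RelIso.mul_apply, mul_assoc]

lemma lexMulLeftHom_injective (G β : Type*) [Group G] [Preorder G] [MulLeftMono G] [Preorder β]
    [Nonempty β] : Function.Injective (lexMulLeftHom G β) := by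
  intro g h hgh
  obtain ⟨b⟩ := ‹Nonempty β›
  simpa [lexMulLeftHom] using congrArg (fun e => (ofLex (e (toLex (1, b)))).1) hgh

theorem exists_injective_hom_orderIso_real (G : Type*) [Group G] [LinearOrder G]
    [MulLeftMono G] [Countable G] : ∃ φ : G →* (ℝ ≃o ℝ), Function.Injective φ := by
  have : Countable (G ×ₗ ℚ) := inferInstanceAs (Countable (G × ℚ))
  have : Nonempty (G ×ₗ ℚ) := ⟨toLex (1, 0)⟩
  obtain ⟨e⟩ := Order.iso_of_countable_dense (G ×ₗ ℚ) ℚ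
  exact ⟨OrderIso.extendToRealHom.comp ((e.conjMulEquiv : _ →* _).comp (lexMulLeftHom G ℚ)),
    OrderIso.extendToRealHom_injective.comp
      (e.conjMulEquiv.injective.comp (lexMulLeftHom_injective G ℚ))⟩

/-- `Homeo⁺(ℝ)` is modelled as the group of strictly increasing bijections of `ℝ`
(these are automatically homeomorphisms). -/
theorem countable_leftOrderable_embeds_in_homeoR (G : Type*) [Group G] [Countable G]
    (hG : IsLeftOrderable G) :
    ∃ φ : G →* Equiv.Perm ℝ, Function.Injective φ ∧ ∀ g : G, StrictMono (φ g) := by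
  obtain ⟨r, hr, hmul⟩ := hG
  classical
  let := linearOrderOfSTO r
  have : MulLeftStrictMono G := ⟨fun g _ _ h => hmul g _ _ h⟩
  have := mulLeftMono_of_mulLeftStrictMono G
  obtain ⟨φ, hφ⟩ := exists_injective_hom_orderIso_real G
  exact ⟨OrderIso.toPermHom.comp φ, OrderIso.toPermHom_injective.comp hφ,
    fun g => (φ g).strictMono⟩
end
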